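/- arXiv:1809.10550 — 3 statements merged into one kernel-verified Lean document; each statement's English description precedes it below -/
import Mathlib

section
/- Let A be a Zinbiel algebra over a field K of characteristic 0. Then the algebra A^(−) = (A, [·,·]) with the commutator product [a,b] = a∘b − b∘a is a Tortkara algebra; that is, [a,b] = −[b,a] for all a,b ∈ A, and [[a,b],[c,b]] = [ [[a,b],c] + [[b,c],a] + [[c,a],b] , b] for all a,b,c ∈ A. -/
/-- The commutator product `[a,b] = a∘b − b∘a`. -/
def zcomm {A : Type} [NonUnitalNonAssocRing A] (a b : A) : A := a * b - b * a

/-- The Jacobian `J(a,b,c) = [[a,b],c] + [[b,c],a] + [[c,a],b]` of the commutator product. -/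
def jacobianJ {A : Type} [NonUnitalNonAssocRing A] (a b c : A) : A :=
  zcomm (zcomm a b) c + zcomm (zcomm b c) a + zcomm (zcomm c a) b

/-- The minus-algebra of a Zinbiel algebra over a field of characteristic 0 is a
Tortkara algebra: the commutator is anticommutative and satisfies the Tortkara identity. -/
theorem minus_algebra_of_zinbiel_is_tortkara (K : Type) [Field K] [CharZero K]
    (A : Type) [NonUnitalNonAssocRing A] [Module K A]
    [SMulCommClass K A A] [IsScalarTower K A A]
    (hzin : ∀ a b c : A, a * (b * c) = (a * b + b * a) * c) :
    (∀ a b : A, zcomm a b = -zcomm b a) ∧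
    (∀ a b c : A,
      zcomm (zcomm a b) (zcomm c b) = zcomm (jacobianJ a b c) b) := by
  constructor
  · intro a b; simp [zcomm]
  · intro a b c
    simp only [zcomm, jacobianJ, mul_sub, sub_mul, mul_add, add_mul, hzin]
    abel
end

section
/- If f ∈ ST(X), i.e., f is a Lie element of the free Zinbiel algebra Zin(X), then p(f) = −f. -/
/-- Nonempty words in the alphabet `X`. -/
def Word (X : Type) : Type := {l : List X // l ≠ []}

/-- The underlying vector space of the free Zinbiel algebra on `X` over `K`:
the space with basis the nonempty words in `X`. -/
abbrev Zin (K X : Type) [Field K] : Type := Word X →₀ K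

/-- All shuffles (interleavings) of two words. -/
def shuffles {X : Type} : List X → List X → List (List X)
  | [], l => [l]
  | a :: as, [] => [a :: as]
  | a :: as, b :: bs =>
      ((shuffles as (b :: bs)).map fun w => a :: w) ++
        ((shuffles (a :: as) bs).map fun w => b :: w)
  termination_by l₁ l₂ => l₁.length + l₂.length

/-- The basis vector of `Zin K X` corresponding to a word (`0` for the empty word). -/
noncomputable def ofList {K X : Type} [Field K] : List X → Zin K X
  | [] => 0
  | a :: t => Finsupp.single ⟨a :: t, by simp⟩ 1

/-- Sum of the basis vectors of a list of words. -/
noncomputable def ofLists {K X : Type} [Field K] (ls : List (List X)) : Zin K X :=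
  (ls.map (ofList (K := K))).sum

/-- The letter `x` as an element of `Zin K X`. -/
noncomputable def ofLetter {K X : Type} [Field K] (x : X) : Zin K X :=
  Finsupp.single ⟨[x], by simp⟩ 1

/-- The Zinbiel product on `Zin K X`, defined on basis words by
`u ∘ (v ++ [y]) = (u ⧢ v) ++ [y]` and extended bilinearly. -/
noncomputable def zmul {K X : Type} [Field K] (f g : Zin K X) : Zin K X :=
  f.sum fun u cu => g.sum fun w cw =>
    (cu * cw) • ofLists ((shuffles u.1 w.1.dropLast).map fun s => s ++ [w.1.getLast w.2])

/-- The shuffle product on `Zin K X`, extended bilinearly from words. -/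
noncomputable def shMul {K X : Type} [Field K] (f g : Zin K X) : Zin K X :=
  f.sum fun u cu => g.sum fun w cw => (cu * cw) • ofLists (shuffles u.1 w.1)

/-- The commutator `[f,g] = f∘g - g∘f` in `Zin K X`. -/
noncomputable def zbracket {K X : Type} [Field K] (f g : Zin K X) : Zin K X :=
  zmul f g - zmul g f

/-- The anticommutator `{f,g} = f∘g + g∘f` in `Zin K X`. -/
noncomputable def jprod {K X : Type} [Field K] (f g : Zin K X) : Zin K X :=
  zmul f g + zmul g f

/-- Swap the last two letters of a word (identity on shorter words). -/
def swapLast {X : Type} (l : List X) : List X :=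
  match l.reverse with
  | z :: y :: t => (y :: z :: t).reverse
  | _ => l

/-- The linear map `p : Zin(X) → Zin(X)`: `p(x) = -x` on letters, and `p` swaps
the last two letters of a word of length ≥ 2. -/
noncomputable def pMap {K X : Type} [Field K] (f : Zin K X) : Zin K X :=
  f.sum fun w c =>
    c • (if w.1.length = 1 then -(Finsupp.single w (1 : K)) else ofList (swapLast w.1))

/-- `bar f = f - p(f)`. -/
noncomputable def bar {K X : Type} [Field K] (f : Zin K X) : Zin K X := f - pMap f

/-- The skew element `\bar{w} = w - p(w)` associated to a word `w`. -/
noncomputable def skew {K X : Type} [Field K] (w : Word X) : Zin K X :=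
  bar (Finsupp.single w 1)

/-- Membership in `ST(X)`, the subalgebra of `(Zin(X), [·,·])` generated by the
letters: the free special Tortkara algebra on `X`. -/
inductive InST {K X : Type} [Field K] : Zin K X → Prop
  | letter (x : X) : InST (ofLetter x)
  | zero : InST 0
  | add {f g : Zin K X} : InST f → InST g → InST (f + g)
  | smul (c : K) {f : Zin K X} : InST f → InST (c • f)
  | bracket {f g : Zin K X} : InST f → InST g → InST (zbracket f g)

/-- Membership in `J(X)`, the subalgebra of `(Zin(X), {·,·})` generated by the
letters: the Jordan elements of `Zin(X)`. -/
inductive InJ {K X : Type} [Field K] : Zin K X → Prop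
  | letter (x : X) : InJ (ofLetter x)
  | zero : InJ 0
  | add {f g : Zin K X} : InJ f → InJ g → InJ (f + g)
  | smul (c : K) {f : Zin K X} : InJ f → InJ (c • f)
  | jmul {f g : Zin K X} : InJ f → InJ g → InJ (jprod f g)

/-- The left-normed anticommutator `{{⋯{x₁,x₂}⋯},xₙ}` of the letters of a word. -/
noncomputable def dynkinWord {K X : Type} [Field K] : List X → Zin K X
  | [] => 0
  | x :: xs => xs.foldl (fun acc y => jprod acc (ofLetter y)) (ofLetter x)

/-- The Dynkin map `D : Zin(X) → Zin(X)`. -/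
noncomputable def dynkin {K X : Type} [Field K] (f : Zin K X) : Zin K X :=
  f.sum fun w c => c • dynkinWord w.1

section Shuffle
variable {X : Type}

@[simp] theorem shuffles_nil_left (l : List X) : shuffles [] l = [l] := by
  cases l <;> simp [shuffles]

@[simp] theorem shuffles_nil_right (l : List X) : shuffles l [] = [l] := by
  cases l <;> simp [shuffles]

theorem shuffles_cons_cons (a b : X) (as bs : List X) :
    shuffles (a :: as) (b :: bs) =
      ((shuffles as (b :: bs)).map fun w => a :: w) ++
        ((shuffles (a :: as) bs).map fun w => b :: w) := by
  rw [shuffles]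

theorem shuffles_comm : ∀ u v : List X,
    ((shuffles u v : List (List X)) : Multiset (List X)) = (shuffles v u : List (List X))
  | [], v => by simp
  | a :: as, [] => by simp
  | a :: as, b :: bs => by
    rw [shuffles_cons_cons, shuffles_cons_cons, ← Multiset.coe_add, ← Multiset.coe_add,
      ← Multiset.map_coe, ← Multiset.map_coe, ← Multiset.map_coe, ← Multiset.map_coe,
      shuffles_comm as (b :: bs), shuffles_comm (a :: as) bs, add_comm]
  termination_by u v => u.length + v.length
end Shuffle
section Snoc
variable {X : Type}

theorem shuffles_snoc : ∀ (p q : List X) (a b : X),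
    ((shuffles (p ++ [a]) (q ++ [b]) : List (List X)) : Multiset (List X)) =
      (Multiset.map (fun w => w ++ [a]) ↑(shuffles p (q ++ [b]))) +
      (Multiset.map (fun w => w ++ [b]) ↑(shuffles (p ++ [a]) q))
  | [], [], a, b => by
    simp only [List.nil_append, shuffles_cons_cons, shuffles_nil_left, shuffles_nil_right,
      List.map_cons, List.map_nil, Multiset.coe_singleton, Multiset.map_singleton,
      Multiset.singleton_add, ← Multiset.coe_add, List.singleton_append]
    exact Multiset.pair_comm _ _
  | [], c :: qs, a, b => by
    have IH := shuffles_snoc [] qs a b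
    simp only [List.nil_append, List.cons_append] at IH ⊢
    simp only [shuffles_cons_cons, shuffles_nil_left, ← Multiset.coe_add, ← Multiset.map_coe,
      Multiset.map_add, Multiset.map_map, Function.comp, Multiset.coe_singleton,
      Multiset.map_singleton, Multiset.singleton_add] at IH ⊢
    rw [IH]
    simp only [Multiset.map_add, Multiset.map_cons, Multiset.map_map, Function.comp,
      Multiset.map_singleton, Multiset.singleton_add, Multiset.add_cons]
    simp only [List.cons_append, List.append_assoc, List.singleton_append]
    exact Multiset.cons_swap _ _ _
  | c :: ps, [], a, b => by
    have IH := shuffles_snoc ps [] a b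
    simp only [List.nil_append, List.cons_append] at IH ⊢
    simp only [shuffles_cons_cons, shuffles_nil_right, ← Multiset.coe_add, ← Multiset.map_coe,
      Multiset.map_add, Multiset.map_map, Function.comp, Multiset.coe_singleton,
      Multiset.map_singleton, Multiset.singleton_add] at IH ⊢
    rw [IH]
    simp only [Multiset.map_add, Multiset.map_cons, Multiset.map_map, Function.comp,
      Multiset.map_singleton, Multiset.singleton_add, Multiset.add_cons]
    simp only [List.cons_append, List.append_assoc, List.singleton_append]
    abel
  | c :: ps, d :: qs, a, b => by
    have IH1 := shuffles_snoc ps (d :: qs) a b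
    have IH2 := shuffles_snoc (c :: ps) qs a b
    simp only [List.nil_append, List.cons_append] at IH1 IH2 ⊢
    simp only [shuffles_cons_cons, ← Multiset.coe_add, ← Multiset.map_coe,
      Multiset.map_add, Multiset.map_map, Function.comp] at IH1 IH2 ⊢
    rw [IH1, IH2]
    simp only [Multiset.map_add, Multiset.map_map, Function.comp]
    simp only [List.cons_append, List.append_assoc]
    abel
  termination_by p q => p.length + q.length
end Snoc
section Alg
variable {K X : Type} [Field K]

/-- Multiset version of `ofLists`. -/
noncomputable def ofMul (m : Multiset (List X)) : Zin K X := (m.map ofList).sum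

theorem ofLists_eq (L : List (List X)) : (ofLists L : Zin K X) = ofMul ↑L := by
  rw [ofLists, ofMul, Multiset.map_coe, Multiset.sum_coe]

@[simp] theorem ofMul_zero : (ofMul 0 : Zin K X) = 0 := rfl

@[simp] theorem ofMul_add (m n : Multiset (List X)) :
    (ofMul (m + n) : Zin K X) = ofMul m + ofMul n := by
  simp [ofMul]

theorem ofList_eq_single (l : List X) (h : l ≠ []) :
    (ofList l : Zin K X) = @Finsupp.single (Word X) K _ ⟨l, h⟩ 1 := by
  cases l with
  | nil => exact absurd rfl h
  | cons a t => rfl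

theorem ofList_word (w : Word X) : (ofList w.1 : Zin K X) = Finsupp.single w 1 := by
  rw [ofList_eq_single w.1 w.2]
  rfl

theorem pMap_single (w : Word X) (c : K) :
    pMap (Finsupp.single w c) =
      c • (if w.1.length = 1 then -(Finsupp.single w (1 : K)) else ofList (swapLast w.1)) := by
  unfold pMap
  exact Finsupp.sum_single_index (by simp)

theorem pMap_add (f g : Zin K X) : pMap (f + g) = pMap f + pMap g := by
  unfold pMap
  exact Finsupp.sum_add_index' (fun w => by simp) (fun w c1 c2 => add_smul c1 c2 _)

@[simp] theorem pMap_zero : pMap (0 : Zin K X) = 0 := by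
  unfold pMap; exact Finsupp.sum_zero_index

theorem pMap_smul (c : K) (f : Zin K X) : pMap (c • f) = c • pMap f := by
  unfold pMap
  rw [Finsupp.sum_smul_index (fun w => by simp), Finsupp.smul_sum]
  exact Finsupp.sum_congr fun w _ => by rw [mul_smul]

theorem pMap_neg (f : Zin K X) : pMap (-f) = -pMap f := by
  rw [← neg_one_smul K f, pMap_smul, neg_one_smul]

theorem pMap_sub (f g : Zin K X) : pMap (f - g) = pMap f - pMap g := by
  rw [sub_eq_add_neg, pMap_add, pMap_neg, sub_eq_add_neg]

theorem zmul_single_single (u w : Word X) (c d : K) :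
    zmul (Finsupp.single u c) (Finsupp.single w d) =
      (c * d) • ofLists ((shuffles u.1 w.1.dropLast).map fun s => s ++ [w.1.getLast w.2]) := by
  unfold zmul
  rw [Finsupp.sum_single_index (by simp [Finsupp.sum_single_index]),
    Finsupp.sum_single_index (by simp)]

theorem zmul_add_left (f g h : Zin K X) : zmul (f + g) h = zmul f h + zmul g h := by
  unfold zmul
  exact Finsupp.sum_add_index' (fun u => by simp)
    (fun u c1 c2 => by simp [add_mul, add_smul, Finsupp.sum_add])

theorem zmul_add_right (f g h : Zin K X) : zmul f (g + h) = zmul f g + zmul f h := by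
  unfold zmul
  rw [← Finsupp.sum_add]
  exact Finsupp.sum_congr fun u _ =>
    Finsupp.sum_add_index' (fun w => by simp) (fun w c1 c2 => by rw [mul_add, add_smul])

theorem zmul_smul_left (c : K) (f g : Zin K X) : zmul (c • f) g = c • zmul f g := by
  unfold zmul
  rw [Finsupp.sum_smul_index (fun u => by simp), Finsupp.smul_sum]
  refine Finsupp.sum_congr fun u _ => ?_
  rw [Finsupp.smul_sum]
  exact Finsupp.sum_congr fun w _ => by rw [mul_assoc, mul_smul]

theorem zmul_smul_right (c : K) (f g : Zin K X) : zmul f (c • g) = c • zmul f g := by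
  unfold zmul
  rw [Finsupp.smul_sum]
  refine Finsupp.sum_congr fun u _ => ?_
  rw [Finsupp.sum_smul_index (fun w => by simp), Finsupp.smul_sum]
  exact Finsupp.sum_congr fun w _ => by rw [mul_left_comm, mul_smul]

@[simp] theorem zmul_zero_left (g : Zin K X) : zmul 0 g = 0 := by
  unfold zmul; exact Finsupp.sum_zero_index

@[simp] theorem zmul_zero_right (f : Zin K X) : zmul f 0 = 0 := by
  unfold zmul
  simp [Finsupp.sum_zero_index]

theorem zmul_neg_left (f g : Zin K X) : zmul (-f) g = -zmul f g := by
  rw [← neg_one_smul K f, zmul_smul_left, neg_one_smul]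

theorem zmul_neg_right (f g : Zin K X) : zmul f (-g) = -zmul f g := by
  rw [← neg_one_smul K g, zmul_smul_right, neg_one_smul]

theorem comp_snoc (q y : X) :
    ((fun w => w ++ [y]) ∘ fun w : List X => w ++ [q]) = fun w : List X => w ++ [q, y] := by
  funext w; simp

theorem zmul_ofList_snoc (u s : List X) (hu : u ≠ []) (y : X) :
    zmul (ofList u : Zin K X) (ofList (s ++ [y])) =
      ofMul (Multiset.map (fun w => w ++ [y]) ↑(shuffles u s)) := by
  erw [ofList_eq_single u hu, ofList_eq_single (s ++ [y]) (by simp), zmul_single_single]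
  simp only [List.dropLast_concat, one_mul, one_smul, ofLists_eq, ← Multiset.map_coe]
  congr 2
  funext w
  congr 1
  simp
end Alg
section PMapWords
variable {K X : Type} [Field K]

theorem swapLast_snoc2 (t : List X) (y z : X) : swapLast (t ++ [y, z]) = t ++ [z, y] := by
  unfold swapLast
  rw [show (t ++ [y, z]).reverse = z :: y :: t.reverse by simp]
  simp

theorem pMap_ofList_snoc2 (t : List X) (y z : X) :
    pMap (ofList (t ++ [y, z]) : Zin K X) = ofList (t ++ [z, y]) := by
  erw [ofList_eq_single (t ++ [y, z]) (by simp), pMap_single]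
  rw [if_neg (by simp), swapLast_snoc2, one_smul]

theorem pMap_ofList_singleton (x : X) : pMap (ofList [x] : Zin K X) = -ofList [x] := by
  erw [ofList_eq_single [x] (by simp), pMap_single]
  rw [show ((⟨[x], by simp⟩ : Word X) : List X).length = 1 from rfl]
  rw [if_pos rfl, one_smul]

@[simp] theorem ofMul_singleton (l : List X) : (ofMul {l} : Zin K X) = ofList l := by
  simp [ofMul]

theorem pMap_ofMul_snoc2 (m : Multiset (List X)) (y z : X) :
    pMap (ofMul (m.map fun w => w ++ [y, z]) : Zin K X) = ofMul (m.map fun w => w ++ [z, y]) := by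
  induction m using Multiset.induction with
  | empty => simp
  | cons a s ih =>
    rw [Multiset.map_cons, Multiset.map_cons, ← Multiset.singleton_add, ← Multiset.singleton_add,
      ofMul_add, ofMul_add, pMap_add, ih, ofMul_singleton, ofMul_singleton, pMap_ofList_snoc2]

/-- dichotomy for nonempty lists -/
theorem nonempty_list_cases (l : List X) (h : l ≠ []) :
    (∃ x, l = [x]) ∨ ∃ t y z, l = t ++ [y, z] := by
  rcases hr : l.reverse with _ | ⟨z, rest⟩
  · exact absurd (by simpa using congrArg List.reverse hr) h
  · rcases rest with _ | ⟨y, t⟩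
    · left
      exact ⟨z, by simpa using congrArg List.reverse hr⟩
    · right
      refine ⟨t.reverse, y, z, ?_⟩
      have := congrArg List.reverse hr
      simpa using this

theorem pMap_pMap (f : Zin K X) : pMap (pMap f) = f := by
  induction f using Finsupp.induction_linear with
  | zero => simp
  | add f g hf hg => rw [pMap_add, pMap_add, hf, hg]
  | single w c =>
    have : Finsupp.single w c = c • (ofList w.1 : Zin K X) := by
      rw [ofList_word, Finsupp.smul_single, smul_eq_mul, mul_one]
    rw [this, pMap_smul, pMap_smul]
    rcases nonempty_list_cases w.1 w.2 with ⟨x, hx⟩ | ⟨t, y, z, hh⟩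
    · rw [hx, pMap_ofList_singleton, pMap_neg, pMap_ofList_singleton, neg_neg]
    · rw [hh, pMap_ofList_snoc2, pMap_ofList_snoc2]
end PMapWords
section Core
variable {K X : Type} [Field K]

/-- The auxiliary bilinear element `h(f,g)`. -/
noncomputable def Hq (f g : Zin K X) : Zin K X :=
  zmul f g + zmul (pMap g) f + zmul g (pMap f) + zmul (pMap f) (pMap g)

theorem zmul_expand (t : List X) (e : X) (ρ : List X) (π κ : X) :
    zmul (ofList (t ++ [e]) : Zin K X) (ofList (ρ ++ [π, κ])) =
      ofMul (Multiset.map (fun w => w ++ [e, κ]) ↑(shuffles t (ρ ++ [π]))) +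
      ofMul (Multiset.map (fun w => w ++ [π, κ]) ↑(shuffles (t ++ [e]) ρ)) := by
  rw [show ρ ++ [π, κ] = (ρ ++ [π]) ++ [κ] by simp]
  rw [zmul_ofList_snoc (t ++ [e]) (ρ ++ [π]) (by simp) κ]
  rw [shuffles_snoc t ρ e π, Multiset.map_add, ofMul_add,
    Multiset.map_map, Multiset.map_map, comp_snoc e κ, comp_snoc π κ]

theorem zmul_expand2 (r : List X) (p q : X) (s : List X) (c d : X) :
    zmul (ofList (r ++ [p, q]) : Zin K X) (ofList (s ++ [c, d])) =
      ofMul (Multiset.map (fun w => w ++ [q, d]) ↑(shuffles (r ++ [p]) (s ++ [c]))) +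
      ofMul (Multiset.map (fun w => w ++ [c, d]) ↑(shuffles (r ++ [p, q]) s)) := by
  rw [show r ++ [p, q] = (r ++ [p]) ++ [q] by simp]
  exact zmul_expand (r ++ [p]) q s c d

theorem zmul_letter (u : List X) (hu : u ≠ []) (y : X) :
    zmul (ofList u : Zin K X) (ofList [y]) = ofList (u ++ [y]) := by
  have h : zmul (ofList u : Zin K X) (ofList [y]) =
      ofMul (Multiset.map (fun w => w ++ [y]) ↑(shuffles u [])) :=
    zmul_ofList_snoc u [] hu y
  rw [h, shuffles_nil_right]
  simp

theorem zmul_letter' (t : List X) (e x : X) :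
    zmul (ofList (t ++ [e]) : Zin K X) (ofList [x]) =
      ofMul (Multiset.map (fun w => w ++ [e, x]) ({t} : Multiset (List X))) := by
  rw [zmul_letter (t ++ [e]) (by simp) x]
  simp [List.append_assoc]

theorem zmul_letter2 (t : List X) (y z x : X) :
    zmul (ofList (t ++ [y, z]) : Zin K X) (ofList [x]) =
      ofMul (Multiset.map (fun w => w ++ [z, x]) ({t ++ [y]} : Multiset (List X))) := by
  rw [show t ++ [y, z] = (t ++ [y]) ++ [z] by simp]
  exact zmul_letter' (t ++ [y]) z x

theorem zmul_expand_letter (x : X) (s : List X) (c d : X) :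
    zmul (ofList [x] : Zin K X) (ofList (s ++ [c, d])) =
      ofMul (Multiset.map (fun w => w ++ [x, d]) ({s ++ [c]} : Multiset (List X))) +
      ofMul (Multiset.map (fun w => w ++ [c, d]) ↑(shuffles [x] s)) := by
  have h := zmul_expand (K := K) [] x s c d
  rw [shuffles_nil_left] at h
  exact h

theorem single_eq_smul_ofList (w : Word X) (c : K) :
    Finsupp.single w c = c • (ofList w.1 : Zin K X) := by
  rw [ofList_word (K := K) w, Finsupp.smul_single, smul_eq_mul, mul_one]

/-- core identity for single letters. -/
theorem core_word_11 (x y : X) :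
    pMap (Hq (ofList [x] : Zin K X) (ofList [y])) = Hq (ofList [y]) (ofList [x]) := by
  have hx := pMap_ofList_singleton (K := K) x
  have hy := pMap_ofList_singleton (K := K) y
  have exy : zmul (ofList [x] : Zin K X) (ofList [y]) =
      ofMul (Multiset.map (fun w => w ++ [x, y]) ({[]} : Multiset (List X))) :=
    zmul_letter' [] x y
  have eyx : zmul (ofList [y] : Zin K X) (ofList [x]) =
      ofMul (Multiset.map (fun w => w ++ [y, x]) ({[]} : Multiset (List X))) :=
    zmul_letter' [] y x
  unfold Hq
  rw [hx, hy]
  simp only [zmul_neg_left, zmul_neg_right, neg_neg]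
  rw [exy, eyx]
  simp only [pMap_add, pMap_neg, pMap_ofMul_snoc2]
end Core
section Core2
variable {K X : Type} [Field K]

theorem core_word_12 (x : X) (s : List X) (c d : X) :
    pMap (Hq (ofList [x] : Zin K X) (ofList (s ++ [c, d]))) =
      Hq (ofList (s ++ [c, d])) (ofList [x]) := by
  have hpa := pMap_ofList_singleton (K := K) x
  have hpb : pMap (ofList (s ++ [c, d]) : Zin K X) = ofList (s ++ [d, c]) :=
    pMap_ofList_snoc2 s c d
  have e1 := zmul_expand_letter (K := K) x s c d
  have e1' := zmul_expand_letter (K := K) x s d c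
  have e2 : zmul (ofList (s ++ [d, c]) : Zin K X) (ofList [x]) =
      ofMul (Multiset.map (fun w => w ++ [c, x]) ({s ++ [d]} : Multiset (List X))) :=
    zmul_letter2 s d c x
  have e3 : zmul (ofList (s ++ [c, d]) : Zin K X) (ofList [x]) =
      ofMul (Multiset.map (fun w => w ++ [d, x]) ({s ++ [c]} : Multiset (List X))) :=
    zmul_letter2 s c d x
  unfold Hq
  rw [hpa, hpb]
  simp only [zmul_neg_left, zmul_neg_right, neg_neg]
  rw [e1, e1', e2, e3]
  simp only [pMap_add, pMap_neg, pMap_ofMul_snoc2]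
  abel

theorem core_word_22 (r : List X) (p q : X) (s : List X) (c d : X) :
    pMap (Hq (ofList (r ++ [p, q]) : Zin K X) (ofList (s ++ [c, d]))) =
      Hq (ofList (s ++ [c, d])) (ofList (r ++ [p, q])) := by
  have hpa : pMap (ofList (r ++ [p, q]) : Zin K X) = ofList (r ++ [q, p]) :=
    pMap_ofList_snoc2 r p q
  have hpb : pMap (ofList (s ++ [c, d]) : Zin K X) = ofList (s ++ [d, c]) :=
    pMap_ofList_snoc2 s c d
  have t1 := zmul_expand2 (K := K) r p q s c d
  have t2 := zmul_expand2 (K := K) s d c r p q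
  have t3 := zmul_expand2 (K := K) s c d r q p
  have t4 := zmul_expand2 (K := K) r q p s d c
  have u1 := zmul_expand2 (K := K) s c d r p q
  have u2 := zmul_expand2 (K := K) r q p s c d
  have u3 := zmul_expand2 (K := K) r p q s d c
  have u4 := zmul_expand2 (K := K) s d c r q p
  unfold Hq
  rw [hpa, hpb, t1, t2, t3, t4, u1, u2, u3, u4]
  simp only [pMap_add, pMap_ofMul_snoc2]
  rw [shuffles_comm (s ++ [d]) (r ++ [p]), shuffles_comm (s ++ [c]) (r ++ [q]),
    shuffles_comm (r ++ [p]) (s ++ [c]), shuffles_comm (r ++ [q]) (s ++ [d])]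
  abel

theorem core_word (a b : List X) (ha : a ≠ []) (hb : b ≠ []) :
    pMap (Hq (ofList a : Zin K X) (ofList b)) = Hq (ofList b) (ofList a) := by
  rcases nonempty_list_cases a ha with ⟨x, rfl⟩ | ⟨r, p, q, rfl⟩ <;>
    rcases nonempty_list_cases b hb with ⟨y, rfl⟩ | ⟨s, c, d, rfl⟩
  · exact core_word_11 x y
  · exact core_word_12 x s c d
  · -- snoc2, letter : from core_word_12 via pMap_pMap
    have h := core_word_12 (K := K) y r p q
    have := congrArg pMap h
    rw [pMap_pMap] at this
    rw [← this]
  · exact core_word_22 r p q s c d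
end Core2
section Final
variable {K X : Type} [Field K]

theorem Hq_add_left (f f' g : Zin K X) : Hq (f + f') g = Hq f g + Hq f' g := by
  unfold Hq
  rw [pMap_add, zmul_add_left, zmul_add_right, zmul_add_right, zmul_add_left]
  abel

theorem Hq_add_right (f g g' : Zin K X) : Hq f (g + g') = Hq f g + Hq f g' := by
  unfold Hq
  rw [pMap_add, zmul_add_right, zmul_add_left, zmul_add_left, zmul_add_right]
  abel

theorem Hq_smul_left (c : K) (f g : Zin K X) : Hq (c • f) g = c • Hq f g := by
  unfold Hq
  rw [pMap_smul, zmul_smul_left, zmul_smul_right, zmul_smul_right, zmul_smul_left]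
  simp only [smul_add]

theorem Hq_smul_right (c : K) (f g : Zin K X) : Hq f (c • g) = c • Hq f g := by
  unfold Hq
  rw [pMap_smul, zmul_smul_right, zmul_smul_left, zmul_smul_left, zmul_smul_right]
  simp only [smul_add]

@[simp] theorem Hq_zero_left (g : Zin K X) : Hq 0 g = 0 := by
  unfold Hq; simp

@[simp] theorem Hq_zero_right (f : Zin K X) : Hq f 0 = 0 := by
  unfold Hq; simp

theorem core_basis (a : List X) (ha : a ≠ []) (g : Zin K X) :
    pMap (Hq (ofList a : Zin K X) g) = Hq g (ofList a) := by
  induction g using Finsupp.induction_linear with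
  | zero => simp
  | add g1 g2 h1 h2 => rw [Hq_add_right, pMap_add, h1, h2, Hq_add_left]
  | single w c =>
    rw [single_eq_smul_ofList, Hq_smul_right, pMap_smul, core_word a w.1 ha w.2, Hq_smul_left]

theorem core (f g : Zin K X) : pMap (Hq f g) = Hq g f := by
  induction f using Finsupp.induction_linear with
  | zero => simp
  | add f1 f2 h1 h2 => rw [Hq_add_left, pMap_add, h1, h2, Hq_add_right]
  | single w c =>
    rw [single_eq_smul_ofList, Hq_smul_left, pMap_smul, core_basis w.1 w.2 g, Hq_smul_right]

theorem zmul_sub_left (f g h : Zin K X) : zmul (f - g) h = zmul f h - zmul g h := by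
  rw [sub_eq_add_neg, zmul_add_left, zmul_neg_left, sub_eq_add_neg]

theorem zmul_sub_right (f g h : Zin K X) : zmul f (g - h) = zmul f g - zmul f h := by
  rw [sub_eq_add_neg, zmul_add_right, zmul_neg_right, sub_eq_add_neg]

theorem zbracket_bar_bar (f g : Zin K X) : zbracket (bar f) (bar g) = bar (Hq f g) := by
  rw [zbracket, bar, bar, bar, core]
  unfold Hq
  simp only [zmul_sub_left, zmul_sub_right]
  abel

theorem pMap_bar (h : Zin K X) : pMap (bar h) = -bar h := by
  rw [bar, pMap_sub, pMap_pMap, neg_sub]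
end Final

/-- If `f` is a Lie element of the free Zinbiel algebra `Zin(X)`, then `p(f) = -f`. -/
theorem pMap_of_lie (K X : Type) [Field K] [CharZero K] (f : Zin K X) (hf : InST f) :
    pMap f = -f := by
  induction hf with
  | letter x =>
    have : (ofLetter x : Zin K X) = ofList [x] := rfl
    rw [this, pMap_ofList_singleton]
  | zero => simp
  | add hf hg ihf ihg => rw [pMap_add, ihf, ihg, neg_add]
  | smul c hf ih => rw [pMap_smul, ih, smul_neg]
  | @bracket f g hf hg ihf ihg =>
    have hhalf : ∀ h : Zin K X, pMap h = -h → bar ((2 : K)⁻¹ • h) = h := by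
      intro h ph
      rw [bar, pMap_smul, ph, smul_neg, sub_neg_eq_add, ← add_smul]
      norm_num
    have hf2 := hhalf f ihf
    have hg2 := hhalf g ihg
    calc pMap (zbracket f g)
        = pMap (zbracket (bar ((2 : K)⁻¹ • f)) (bar ((2 : K)⁻¹ • g))) := by rw [hf2, hg2]
      _ = pMap (bar (Hq ((2 : K)⁻¹ • f) ((2 : K)⁻¹ • g))) := by rw [zbracket_bar_bar]
      _ = -bar (Hq ((2 : K)⁻¹ • f) ((2 : K)⁻¹ • g)) := pMap_bar _
      _ = -zbracket (bar ((2 : K)⁻¹ • f)) (bar ((2 : K)⁻¹ • g)) := by rw [zbracket_bar_bar]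
      _ = -zbracket f g := by rw [hf2, hg2]
end

section
/- Let T_n denote the n-th homogeneous component of the free Tortkara algebra T({x,y}) (the span of the images of the degree-n nonassociative monomials in x, y). Then T_{n+1} = T_n·T_1 for every n ≥ 1, i.e., every element of T_{n+1} is a linear combination of products of an element of T_n with a generator. -/
/-- A bundled Zinbiel algebra over `K`: a nonunital nonassociative `K`-algebra whose
product satisfies the Zinbiel identity `a∘(b∘c) = (a∘b + b∘a)∘c`. -/
structure ZinbielAlgebra (K : Type) [Field K] : Type 1 where
  carrier : Type
  [ring : NonUnitalNonAssocRing carrier]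
  [mod : Module K carrier]
  [smulComm : SMulCommClass K carrier carrier]
  [tower : IsScalarTower K carrier carrier]
  zinbiel : ∀ a b c : carrier, a * (b * c) = (a * b + b * a) * c

attribute [instance] ZinbielAlgebra.ring ZinbielAlgebra.mod
  ZinbielAlgebra.smulComm ZinbielAlgebra.tower

/-- A bundled Tortkara algebra over `K`: an anticommutative nonunital nonassociative
`K`-algebra satisfying `(ab)(cb) = J(a,b,c)b`, where `J(a,b,c) = (ab)c+(bc)a+(ca)b`. -/
structure TortkaraAlgebra (K : Type) [Field K] : Type 1 where
  carrier : Type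
  [ring : NonUnitalNonAssocRing carrier]
  [mod : Module K carrier]
  [smulComm : SMulCommClass K carrier carrier]
  [tower : IsScalarTower K carrier carrier]
  anticomm : ∀ a b : carrier, a * b = -(b * a)
  tortkara : ∀ a b c : carrier,
    (a * b) * (c * b) = ((a * b) * c + (b * c) * a + (c * a) * b) * b

attribute [instance] TortkaraAlgebra.ring TortkaraAlgebra.mod
  TortkaraAlgebra.smulComm TortkaraAlgebra.tower

/-- Nonassociative monomials of a given degree in the two generators `x, y`. -/
inductive TMon {K : Type} [Field K] (T : TortkaraAlgebra K) (x y : T.carrier) :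
    ℕ → T.carrier → Prop
  | genx : TMon T x y 1 x
  | geny : TMon T x y 1 y
  | mul {m n : ℕ} {s t : T.carrier} :
      TMon T x y m s → TMon T x y n t → TMon T x y (m + n) (s * t)

section Aux
variable {K : Type} [Field K] [CharZero K] (T : TortkaraAlgebra K) (x y : T.carrier)

lemma sq_zero (a : T.carrier) : a * a = 0 := by
  have h : a * a + a * a = 0 := by
    nth_rewrite 1 [T.anticomm a a]
    exact neg_add_cancel _
  have h2 : (2 : K) • (a * a) = 0 := by rw [two_smul]; exact h
  calc a * a = (2:K)⁻¹ • ((2:K) • (a*a)) := (inv_smul_smul₀ (by norm_num) _).symm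
    _ = (2:K)⁻¹ • (0 : T.carrier) := by rw [h2]
    _ = 0 := smul_zero _

lemma lin (a b c d : T.carrier) :
    (a*b)*(c*d) + (a*d)*(c*b)
      = ((a*b)*c + (b*c)*a + (c*a)*b)*d + ((a*d)*c + (d*c)*a + (c*a)*d)*b := by
  have h := T.tortkara a (b+d) c
  have h1 := T.tortkara a b c
  have h2 := T.tortkara a d c
  have e : (a*b)*(c*d) + (a*d)*(c*b)
      = (a*(b+d))*(c*(b+d)) - (a*b)*(c*b) - (a*d)*(c*d) := by
    simp only [mul_add, add_mul]; abel
  rw [e, h, h1, h2]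
  simp only [mul_add, add_mul]; abel

lemma tmon_pos {N : ℕ} {u : T.carrier} (h : TMon T x y N u) : 1 ≤ N := by
  induction h with
  | genx => exact le_refl 1
  | geny => exact le_refl 1
  | mul h1 h2 ih1 ih2 => omega

lemma tmon_cases {N : ℕ} {u : T.carrier} (h : TMon T x y N u) :
    (N = 1 ∧ (u = x ∨ u = y)) ∨
      ∃ m k s t, m + k = N ∧ TMon T x y m s ∧ TMon T x y k t ∧ u = s * t := by
  cases h with
  | genx => exact Or.inl ⟨rfl, Or.inl rfl⟩
  | geny => exact Or.inl ⟨rfl, Or.inr rfl⟩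
  | mul h1 h2 => exact Or.inr ⟨_, _, _, _, rfl, h1, h2, rfl⟩

lemma tmon_one {u : T.carrier} (h : TMon T x y 1 u) : u = x ∨ u = y := by
  rcases tmon_cases T x y h with ⟨_, h⟩ | ⟨m, k, s, t, hmk, hs, ht, rfl⟩
  · exact h
  · have := tmon_pos T x y hs; have := tmon_pos T x y ht; omega

lemma tmon_two_or {N : ℕ} {u : T.carrier} (h : TMon T x y N u) (hN : 2 ≤ N) :
    ∃ m k s t, m + k = N ∧ TMon T x y m s ∧ TMon T x y k t ∧ u = s * t := by
  rcases tmon_cases T x y h with ⟨h1, _⟩ | h2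
  · omega
  · exact h2

lemma tmon_cast {N M : ℕ} {u : T.carrier} (h : TMon T x y N u) (e : N = M) :
    TMon T x y M u := e ▸ h

def SS (n : ℕ) : Submodule K T.carrier :=
  Submodule.span K {u : T.carrier |
    ∃ s t : T.carrier, TMon T x y n s ∧ TMon T x y 1 t ∧ u = s * t}

lemma mem_SS_of {n : ℕ} {s t : T.carrier} (hs : TMon T x y n s) (ht : TMon T x y 1 t) :
    s * t ∈ SS T x y n :=
  Submodule.subset_span ⟨s, t, hs, ht, rfl⟩

end Aux

set_option linter.unusedSectionVars false

section Main
variable {K : Type} [Field K] [CharZero K] (T : TortkaraAlgebra K) (x y : T.carrier)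

lemma scriptA {n m : ℕ} (hm : 2 ≤ m) (hmk : m + 2 = n + 1)
    {a t d : T.carrier} (ha : TMon T x y (m-1) a) (ht : TMon T x y 1 t)
    (hd : TMon T x y 1 d) :
    (a*t)*(t*d) ∈ SS T x y n := by
  have h1 := lin T a t t d
  rw [sq_zero T t] at h1
  simp only [mul_zero, zero_mul, add_zero, zero_add] at h1
  rw [h1]
  simp only [add_mul]
  refine add_mem (add_mem ?_ ?_) (add_mem (add_mem ?_ ?_) ?_)
  · exact mem_SS_of T x y (tmon_cast T x y (TMon.mul (TMon.mul ha ht) ht) (by omega)) hd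
  · exact mem_SS_of T x y (tmon_cast T x y (TMon.mul (TMon.mul ht ha) ht) (by omega)) hd
  · exact mem_SS_of T x y (tmon_cast T x y (TMon.mul (TMon.mul ha hd) ht) (by omega)) ht
  · exact mem_SS_of T x y (tmon_cast T x y (TMon.mul (TMon.mul hd ht) ha) (by omega)) ht
  · exact mem_SS_of T x y (tmon_cast T x y (TMon.mul (TMon.mul ht ha) hd) (by omega)) ht

lemma scriptB {n m k : ℕ} (hm : 2 ≤ m) (hk : 3 ≤ k) (hmk : m + k = n + 1)
    {a g c h' : T.carrier} (ha : TMon T x y (m-1) a) (hg : TMon T x y 1 g)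
    (hc : TMon T x y (k-1) c) (hh : TMon T x y 1 h')
    (IH : ∀ j, j < k → ∀ m' u v, m' + j = n + 1 →
      TMon T x y m' u → TMon T x y j v → u * v ∈ SS T x y n) :
    (a*g)*(c*h') ∈ SS T x y n := by
  rw [show c*h' = -(h'*c) from T.anticomm c h', mul_neg]
  refine neg_mem ?_
  have h1 := lin T a g h' c
  rw [eq_sub_of_add_eq h1]
  refine sub_mem ?_ (IH 2 (by omega) _ _ _ (by omega) (TMon.mul ha hc) (TMon.mul hh hg))
  simp only [add_mul]
  refine add_mem (add_mem (add_mem ?_ ?_) ?_) (add_mem (add_mem ?_ ?_) ?_)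
  · exact IH (k-1) (by omega) _ _ _ (by omega) (TMon.mul (TMon.mul ha hg) hh) hc
  · exact IH (k-1) (by omega) _ _ _ (by omega) (TMon.mul (TMon.mul hg hh) ha) hc
  · exact IH (k-1) (by omega) _ _ _ (by omega) (TMon.mul (TMon.mul hh ha) hg) hc
  · exact mem_SS_of T x y (tmon_cast T x y (TMon.mul (TMon.mul ha hc) hh) (by omega)) hg
  · exact mem_SS_of T x y (tmon_cast T x y (TMon.mul (TMon.mul hc hh) ha) (by omega)) hg
  · exact mem_SS_of T x y (tmon_cast T x y (TMon.mul (TMon.mul hh ha) hc) (by omega)) hg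

lemma key : ∀ n, 1 ≤ n → ∀ k m (u v : T.carrier), m + k = n + 1 →
    TMon T x y m u → TMon T x y k v → u * v ∈ SS T x y n := by
  intro n
  induction n using Nat.strong_induction_on with
  | _ n IHn =>
  intro hn k
  induction k using Nat.strong_induction_on with
  | _ k IHk =>
  intro m u v hmk hu hv
  rcases Nat.lt_or_ge k 2 with hk | hk
  · have hk1 : k = 1 := by have := tmon_pos T x y hv; omega
    subst hk1
    have hmn : m = n := by omega
    subst hmn
    exact mem_SS_of T x y hu hv
  rcases Nat.lt_or_ge m 2 with hm | hm
  · have hm1 : m = 1 := by have := tmon_pos T x y hu; omega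
    subst hm1
    rw [T.anticomm u v]
    exact neg_mem (mem_SS_of T x y (tmon_cast T x y hv (by omega)) hu)
  -- m ≥ 2, k ≥ 2
  have hu' : u ∈ SS T x y (m - 1) := by
    obtain ⟨m1, m2, s, t, hd, hs, ht, rfl⟩ := tmon_two_or T x y hu (by omega)
    exact IHn (m-1) (by omega) (by omega) m2 m1 s t (by omega) hs ht
  clear hu
  induction hu' using Submodule.span_induction with
  | mem w hw =>
    obtain ⟨a, g, ha, hg, rfl⟩ := hw
    rcases Nat.lt_or_ge k 3 with hk3 | hk3
    · -- k = 2
      have hk2 : k = 2 := by omega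
      subst hk2
      obtain ⟨p, q, c, d, hpq, hc, hd, rfl⟩ := tmon_two_or T x y hv (le_refl 2)
      have hp1 : p = 1 := by
        have := tmon_pos T x y hc; have := tmon_pos T x y hd; omega
      subst hp1
      have hq1 : q = 1 := by omega
      subst hq1
      have tri : g = c ∨ g = d ∨ c = d := by
        rcases tmon_one T x y hg with h1 | h1 <;>
          rcases tmon_one T x y hc with h2 | h2 <;>
            rcases tmon_one T x y hd with h3 | h3 <;> simp [h1, h2, h3]
      rcases tri with rfl | rfl | rfl
      · exact scriptA T x y hm hmk ha hg hd
      · rw [T.anticomm c g, mul_neg]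
        exact neg_mem (scriptA T x y hm hmk ha hg hc)
      · rw [sq_zero T c, mul_zero]
        exact zero_mem _
    · -- k ≥ 3
      have hv' : v ∈ SS T x y (k - 1) := by
        obtain ⟨m1, m2, s, t, hd, hs, ht, rfl⟩ := tmon_two_or T x y hv (by omega)
        exact IHn (k-1) (by omega) (by omega) m2 m1 s t (by omega) hs ht
      clear hv
      induction hv' using Submodule.span_induction with
      | mem z hz =>
        obtain ⟨c, h', hc, hh, rfl⟩ := hz
        exact scriptB T x y hm hk3 hmk ha hg hc hh IHk
      | zero => rw [mul_zero]; exact zero_mem _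
      | add p q hp hq ihp ihq => rw [mul_add]; exact add_mem ihp ihq
      | smul r z hz ih => rw [mul_smul_comm]; exact Submodule.smul_mem _ _ ih
  | zero => rw [zero_mul]; exact zero_mem _
  | add p q hp hq ihp ihq => rw [add_mul]; exact add_mem ihp ihq
  | smul r z hz ih => rw [smul_mul_assoc]; exact Submodule.smul_mem _ _ ih

end Main


/-- In the free Tortkara algebra on two generators, the homogeneous components satisfy
`T_{n+1} = T_n · T_1` for every `n ≥ 1`. -/
theorem free_tortkara_two_gen_components (K : Type) [Field K] [CharZero K]
    (T : TortkaraAlgebra K) (x y : T.carrier)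
    (hfree : ∀ (S : TortkaraAlgebra K) (s t : S.carrier),
      ∃! φ : T.carrier →ₙₐ[K] S.carrier, φ x = s ∧ φ y = t)
    (n : ℕ) (hn : 1 ≤ n) :
    Submodule.span K {u : T.carrier | TMon T x y (n + 1) u} =
      Submodule.span K {u : T.carrier |
        ∃ s t : T.carrier, TMon T x y n s ∧ TMon T x y 1 t ∧ u = s * t} := by
  apply le_antisymm
  · rw [Submodule.span_le]
    rintro u hu
    obtain ⟨m, k, s, t, hmk, hs, ht, rfl⟩ := tmon_two_or T x y hu (by omega)
    exact key T x y n hn k m s t hmk hs ht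
  · rw [Submodule.span_le]
    rintro u ⟨s, t, hs, ht, rfl⟩
    exact Submodule.subset_span (TMon.mul hs ht)
end
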